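/- arXiv:2102.03811 — 2 statements merged into one kernel-verified Lean document; each statement's English description precedes it below -/
import Mathlib

section
/- Let R be a nontrivial ring and let n ≥ 2 be an integer. Then the full matrix ring M_n(R) is not a right qnil-duo ring (and also not a left qnil-duo ring). -/
/-- An element `a` of a ring is quasinilpotent if `1 + a * x` is a unit
for every `x` commuting with `a`. -/
def IsQuasinilpotent {R : Type*} [Ring R] (a : R) : Prop :=
  ∀ x : R, a * x = x * a → IsUnit (1 + a * x)

/-- A ring is right qnil-duo if `R^qnil · a ⊆ a · R^qnil` for every `a`. -/
def IsRightQnilDuo (R : Type*) [Ring R] : Prop :=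
  ∀ a b : R, IsQuasinilpotent b → ∃ c : R, IsQuasinilpotent c ∧ b * a = a * c

/-- A ring is left qnil-duo if `a · R^qnil ⊆ R^qnil · a` for every `a`. -/
def IsLeftQnilDuo (R : Type*) [Ring R] : Prop :=
  ∀ a b : R, IsQuasinilpotent b → ∃ c : R, IsQuasinilpotent c ∧ a * b = c * a

/-!
The square-zero matrix unit `E₁₂` is quasinilpotent. For `a = E₂₁` we get `E₁₂ a = E₁₁`, whereas
every matrix `a c` has zero first row, so `E₁₂ a ∉ a · M_n(R)`; symmetrically `a E₁₂ = E₂₂`, whereas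
every `c a` has zero second column.
-/

theorem IsNilpotent.isQuasinilpotent {R : Type*} [Ring R] {b : R} (hb : IsNilpotent b) :
    IsQuasinilpotent b :=
  fun _ hx => (Commute.isNilpotent_mul_right hx hb).isUnit_one_add

namespace Matrix

variable {ι R : Type*} [Fintype ι] [DecidableEq ι] [Ring R]

theorem isNilpotent_single_of_ne {i j : ι} (hij : i ≠ j) (r : R) : IsNilpotent (single i j r) :=
  ⟨2, by rw [pow_two, single_mul_single_of_ne _ _ _ _ hij.symm]⟩

variable [Nontrivial ι] [Nontrivial R]

theorem not_isRightQnilDuo : ¬ IsRightQnilDuo (Matrix ι ι R) := by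
  intro h
  obtain ⟨i, j, hij⟩ := exists_pair_ne ι
  obtain ⟨c, -, hc⟩ :=
    h (single j i 1) (single i j 1) (isNilpotent_single_of_ne hij 1).isQuasinilpotent
  have hii := congrFun (congrFun hc i) i
  rw [single_mul_single_same, single_mul_apply_of_ne _ _ _ _ _ hij] at hii
  simp at hii

theorem not_isLeftQnilDuo : ¬ IsLeftQnilDuo (Matrix ι ι R) := by
  intro h
  obtain ⟨i, j, hij⟩ := exists_pair_ne ι
  obtain ⟨c, -, hc⟩ :=
    h (single j i 1) (single i j 1) (isNilpotent_single_of_ne hij 1).isQuasinilpotent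
  have hjj := congrFun (congrFun hc j) j
  rw [single_mul_single_same, mul_single_apply_of_ne _ _ _ _ _ hij.symm] at hjj
  simp at hjj

end Matrix

theorem stmt13 {R : Type*} [Ring R] [Nontrivial R] (n : ℕ) (hn : 2 ≤ n) :
    ¬ IsRightQnilDuo (Matrix (Fin n) (Fin n) R) ∧
      ¬ IsLeftQnilDuo (Matrix (Fin n) (Fin n) R) := by
  have : Nontrivial (Fin n) := Fin.nontrivial_iff_two_le.mpr hn
  exact ⟨Matrix.not_isRightQnilDuo, Matrix.not_isLeftQnilDuo⟩
end

section
/- Let R be a domain (a nontrivial ring with no nonzero zero divisors) and let D₂(R) be the ring of 2×2 upper triangular matrices over R with equal diagonal entries, realized as the trivial square-zero extension TrivSqZeroExt R R with multiplication (a, b)·(a', b') = (a·a', a·b' + b·a'). If D₂(R) is a right qnil-duo ring, then R is a right qnil-duo ring. -/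
/-!
Embed `R` in `D₂(R)` diagonally by `inl`. Since a square-zero extension is a unit exactly when
its `R`-component is, an element `c` of `R` is quasinilpotent iff `inl c` is. Given `a ≠ 0` and
quasinilpotent `b`, the qnil-duo property of `D₂(R)` yields a quasinilpotent `C` with
`inl b * inl a = inl a * C`; the second component reads `a * C.snd = 0`, so `C = inl C.fst` in a
domain, and `C.fst` is the required quasinilpotent element of `R`.
-/

theorem isQuasinilpotent_zero {R : Type*} [Ring R] : IsQuasinilpotent (0 : R) := by
  intro x _
  simp

namespace TrivSqZeroExt

variable {R M : Type*} [Ring R] [AddCommGroup M] [Module R M] [Module Rᵐᵒᵖ M]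

theorem isQuasinilpotent_inl_iff [SMulCommClass R Rᵐᵒᵖ M] {b : R} :
    IsQuasinilpotent (inl b : TrivSqZeroExt R M) ↔ IsQuasinilpotent b := by
  constructor
  · intro hb x hx
    have hcomm : (inl b : TrivSqZeroExt R M) * inl x = inl x * inl b := by
      rw [inl_mul_inl, inl_mul_inl, hx]
    simpa [isUnit_iff_isUnit_fst] using hb (inl x) hcomm
  · intro hb X hX
    have hcomm : b * X.fst = X.fst * b := by simpa using congrArg fst hX
    simpa [isUnit_iff_isUnit_fst] using hb X.fst hcomm

theorem eq_inl_fst_of_inl_mul_eq_inl [NoZeroSMulDivisors R M] {a d : R} (ha : a ≠ 0)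
    {C : TrivSqZeroExt R M} (h : inl a * C = inl d) : C = inl C.fst := by
  have hsnd : a • C.snd = 0 := by simpa using congrArg snd h
  ext
  · rfl
  · exact (eq_zero_or_eq_zero_of_smul_eq_zero hsnd).resolve_left ha

end TrivSqZeroExt

open TrivSqZeroExt in
theorem stmt15 {R : Type*} [Ring R] [IsDomain R]
    (h : IsRightQnilDuo (TrivSqZeroExt R R)) : IsRightQnilDuo R := by
  intro a b hb
  rcases eq_or_ne a 0 with rfl | ha
  · exact ⟨0, isQuasinilpotent_zero, by simp⟩
  obtain ⟨C, hC, hmul⟩ := h (inl a) (inl b) (isQuasinilpotent_inl_iff.mpr hb)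
  have hC_inl : C = inl C.fst :=
    eq_inl_fst_of_inl_mul_eq_inl ha (by rw [← hmul, inl_mul_inl])
  refine ⟨C.fst, isQuasinilpotent_inl_iff.mp (hC_inl ▸ hC), ?_⟩
  simpa using congrArg fst hmul
end
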